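/- If H is an LA-semihypergroup with a left identity such that H ∘ a = H for all a ∈ H, then H is intra-regular: every a ∈ H satisfies a ∈ (H ∘ (a ∘ a)) ∘ H. -/

import Mathlib

open Set

/-- Elementwise extension of a hyperoperation to subsets:
`hmul op A B = ⋃_{a∈A, b∈B} op a b`. -/
def hmul {H : Type*} (op : H → H → Set H) (A B : Set H) : Set H :=
  ⋃ a ∈ A, ⋃ b ∈ B, op a b

/-!
Since `H ∘ a = H`, we find `a ∈ x ∘ a` and `x ∈ y ∘ a`, so `a ∈ (y ∘ a) ∘ a = (a ∘ a) ∘ y` by the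
left invertive law, i.e. `a ∈ t ∘ y` for some `t ∈ a ∘ a`. The left identity gives
`t ∈ e ∘ t ⊆ H ∘ (a ∘ a)`, whence `a ∈ (H ∘ (a ∘ a)) ∘ H`.
-/

section Hyperoperation

variable {H : Type*} (op : H → H → Set H)

theorem mem_hmul {A B : Set H} {x : H} :
    x ∈ hmul op A B ↔ ∃ a ∈ A, ∃ b ∈ B, x ∈ op a b := by
  simp only [hmul, mem_iUnion, exists_prop]

theorem hmul_mono_left {A A' : Set H} (hA : A ⊆ A') (B : Set H) :
    hmul op A B ⊆ hmul op A' B := by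
  intro x hx
  obtain ⟨a, ha, b, hb, hx⟩ := (mem_hmul op).1 hx
  exact (mem_hmul op).2 ⟨a, hA ha, b, hb, hx⟩

theorem subset_univ_hmul_of_isLeftIdentity {e : H} (he : ∀ a : H, a ∈ op e a) (A : Set H) :
    A ⊆ hmul op univ A :=
  fun a ha => (mem_hmul op).2 ⟨e, mem_univ e, a, ha, he a⟩

theorem exists_mem_op_of_univ_hmul_eq_univ {a : H} (h : hmul op univ {a} = univ) (x : H) :
    ∃ y, x ∈ op y a := by
  obtain ⟨y, -, b, rfl, hx⟩ := (mem_hmul op).1 (h.symm ▸ mem_univ x : x ∈ hmul op univ {a})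
  exact ⟨y, hx⟩

theorem mem_op_self_hmul_univ
    (hLA : ∀ x y z : H, hmul op (op x y) {z} = hmul op (op z y) {x})
    {a : H} (h : hmul op univ {a} = univ) :
    a ∈ hmul op (op a a) univ := by
  obtain ⟨x, hxa⟩ := exists_mem_op_of_univ_hmul_eq_univ op h a
  obtain ⟨y, hya⟩ := exists_mem_op_of_univ_hmul_eq_univ op h x
  have ha : a ∈ hmul op (op y a) {a} := (mem_hmul op).2 ⟨x, hya, a, rfl, hxa⟩
  rw [hLA y a a] at ha
  obtain ⟨t, ht, b, -, hat⟩ := (mem_hmul op).1 ha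
  exact (mem_hmul op).2 ⟨t, ht, b, mem_univ b, hat⟩

end Hyperoperation

theorem stmt7_general {H : Type*} (op : H → H → Set H)
    (hLA : ∀ x y z : H, hmul op (op x y) {z} = hmul op (op z y) {x})
    (e : H) (he : ∀ a : H, a ∈ op e a)
    (h : ∀ a : H, hmul op Set.univ {a} = Set.univ) :
    ∀ a : H, a ∈ hmul op (hmul op Set.univ (op a a)) Set.univ := fun a =>
  hmul_mono_left op (subset_univ_hmul_of_isLeftIdentity op he (op a a)) univ
    (mem_op_self_hmul_univ op hLA (h a))

theorem stmt7 {H : Type*} (op : H → H → Set H)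
    (hne : ∀ a b : H, (op a b).Nonempty)
    (hLA : ∀ x y z : H, hmul op (op x y) {z} = hmul op (op z y) {x})
    (e : H) (he : ∀ a : H, a ∈ op e a)
    (h : ∀ a : H, hmul op Set.univ {a} = Set.univ) :
    ∀ a : H, a ∈ hmul op (hmul op Set.univ (op a a)) Set.univ :=
  stmt7_general op hLA e he h
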